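/- Let k be a field of characteristic p, let Ū ≠ Ū' be the unipotent radicals of two opposite Borel subgroups of SL₂(F_p) (or PSL₂(F_p)), and let W be a k[SL₂(F_p)]-module generated by its Ū'-invariants W^{Ū'}. Then W is generated by W^{Ū'} already as a k[Ū]-module. -/

import Mathlib

def upEl (p : ℕ) (a : ZMod p) : Matrix.SpecialLinearGroup (Fin 2) (ZMod p) :=
  ⟨!![1, a; 0, 1], by norm_num [Matrix.det_fin_two_of]⟩

def lowEl (p : ℕ) (a : ZMod p) : Matrix.SpecialLinearGroup (Fin 2) (ZMod p) :=
  ⟨!![1, 0; a, 1], by norm_num [Matrix.det_fin_two_of]⟩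

/-!
Write `Ū` for the upper and `Ū'` for the lower unipotent subgroup of `SL₂(F)`. Lower triangular
matrices normalise `Ū'`, so they preserve `W^{Ū'}`; hence every `g` in the big cell
`Ū · (lower triangular) = {g | g₁₁ ≠ 0}` maps `W^{Ū'}` into `Ū · W^{Ū'}`. Every other `g` lies
in `Ū w` with `w` antidiagonal, and `w Ū w⁻¹ = Ū'`. For `s ∈ W^{Ū'}` the sum
`v = ∑ y, upper y • s` is `Ū`-fixed, hence `w • v ∈ W^{Ū'}`, and
`w • s = w • v - ∑_{y ≠ 0} (w * upper y) • s`, where each `w * upper y` with `y ≠ 0` lies in the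
big cell.
-/

namespace SLTwo

open Matrix

section CommRing

variable {R : Type*} [CommRing R]

def upper (a : R) : SpecialLinearGroup (Fin 2) R :=
  ⟨!![1, a; 0, 1], by norm_num [det_fin_two_of]⟩

def lower (a : R) : SpecialLinearGroup (Fin 2) R :=
  ⟨!![1, 0; a, 1], by norm_num [det_fin_two_of]⟩

@[simp]
lemma coe_upper (a : R) : (upper a : Matrix (Fin 2) (Fin 2) R) = !![1, a; 0, 1] := rfl

@[simp]
lemma coe_lower (a : R) : (lower a : Matrix (Fin 2) (Fin 2) R) = !![1, 0; a, 1] := rfl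

@[simp]
lemma upper_zero : upper (0 : R) = 1 := by
  ext i j
  fin_cases i <;> fin_cases j <;> rfl

lemma upper_mul_upper (a b : R) : upper a * upper b = upper (a + b) := by
  ext i j
  fin_cases i <;> fin_cases j <;> simp [mul_apply, Fin.sum_univ_two, add_comm]

lemma upper_mul_apply_zero (t : R) (g : SpecialLinearGroup (Fin 2) R) (j : Fin 2) :
    (upper t * g) 0 j = g 0 j + t * g 1 j := by
  simp [mul_apply, Fin.sum_univ_two]

lemma upper_mul_apply_one (t : R) (g : SpecialLinearGroup (Fin 2) R) (j : Fin 2) :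
    (upper t * g) 1 j = g 1 j := by
  simp [mul_apply, Fin.sum_univ_two]

lemma mul_upper_apply_one_one (g : SpecialLinearGroup (Fin 2) R) (y : R) :
    (g * upper y) 1 1 = g 1 0 * y + g 1 1 := by
  simp [mul_apply, Fin.sum_univ_two]

lemma eq_upper_mul (t : R) (g : SpecialLinearGroup (Fin 2) R) :
    g = upper t * (upper (-t) * g) := by
  rw [← mul_assoc, upper_mul_upper, add_neg_cancel, upper_zero, one_mul]

lemma det_eq_one (g : SpecialLinearGroup (Fin 2) R) : g 0 0 * g 1 1 - g 0 1 * g 1 0 = 1 := by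
  rw [← det_fin_two, g.det_coe]

end CommRing

variable {k F W : Type*} [Ring k] [Field F] [AddCommGroup W] [Module k W]
  [DistribMulAction (SpecialLinearGroup (Fin 2) F) W]

lemma lower_mul_of_apply_zero_one_eq_zero {h : SpecialLinearGroup (Fin 2) F} (h01 : h 0 1 = 0)
    (b : F) : lower b * h = h * lower (b / h 1 1 ^ 2) := by
  have hdet := det_eq_one h
  rw [h01, zero_mul, sub_zero] at hdet
  have h11 : h 1 1 ≠ 0 := right_ne_zero_of_mul_eq_one hdet
  ext i j
  fin_cases i <;> fin_cases j <;> simp [mul_apply, Fin.sum_univ_two, h01]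
  · field_simp
    linear_combination b * hdet

lemma lower_mul_of_antidiagonal {h : SpecialLinearGroup (Fin 2) F} (h00 : h 0 0 = 0)
    (h11 : h 1 1 = 0) (b : F) : lower b * h = h * upper (b * h 0 1 / h 1 0) := by
  have hdet := det_eq_one h
  rw [h00, zero_mul, zero_sub] at hdet
  have h10 : h 1 0 ≠ 0 := by rintro h10; simp [h10] at hdet
  ext i j
  fin_cases i <;> fin_cases j <;> simp [mul_apply, Fin.sum_univ_two, h00, h11]
  field_simp

variable (F) in
def IsLowerFixed (s : W) : Prop := ∀ b : F, lower b • s = s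

variable (k F W) in
def upperSpan : Submodule k W :=
  Submodule.span k {x : W | ∃ (a : F) (s : W), IsLowerFixed F s ∧ x = upper a • s}

lemma IsLowerFixed.smul_of_apply_zero_one_eq_zero {s : W} (hs : IsLowerFixed F s)
    {h : SpecialLinearGroup (Fin 2) F} (h01 : h 0 1 = 0) : IsLowerFixed F (h • s) := by
  intro b
  rw [← mul_smul, lower_mul_of_apply_zero_one_eq_zero h01, mul_smul, hs]

lemma isLowerFixed_smul_of_antidiagonal {v : W} (hv : ∀ a : F, upper a • v = v)
    {h : SpecialLinearGroup (Fin 2) F} (h00 : h 0 0 = 0) (h11 : h 1 1 = 0) :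
    IsLowerFixed F (h • v) := by
  intro b
  rw [← mul_smul, lower_mul_of_antidiagonal h00 h11, mul_smul, hv]

lemma upper_smul_sum_upper_smul [Fintype F] (a : F) (s : W) :
    upper a • ∑ y : F, upper y • s = ∑ y : F, upper y • s := by
  simp only [Finset.smul_sum, ← mul_smul, upper_mul_upper]
  exact Fintype.sum_equiv (Equiv.addLeft a) _ _ fun _ ↦ rfl

lemma upper_smul_mem_upperSpan {s : W} (hs : IsLowerFixed F s) (a : F) :
    upper a • s ∈ upperSpan k F W :=
  Submodule.subset_span ⟨a, s, hs, rfl⟩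

lemma smul_mem_upperSpan_of_apply_one_one_ne_zero {s : W} (hs : IsLowerFixed F s)
    {g : SpecialLinearGroup (Fin 2) F} (hg : g 1 1 ≠ 0) : g • s ∈ upperSpan k F W := by
  set t := g 0 1 / g 1 1
  have h01 : (upper (-t) * g) 0 1 = 0 := by
    rw [upper_mul_apply_zero, neg_mul, div_mul_cancel₀ _ hg, add_neg_cancel]
  rw [eq_upper_mul t g, mul_smul]
  exact upper_smul_mem_upperSpan (hs.smul_of_apply_zero_one_eq_zero h01) t

lemma smul_mem_upperSpan_of_antidiagonal [Fintype F] {s : W} (hs : IsLowerFixed F s)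
    {h : SpecialLinearGroup (Fin 2) F} (h00 : h 0 0 = 0) (h11 : h 1 1 = 0) :
    h • s ∈ upperSpan k F W := by
  classical
  have h10 : h 1 0 ≠ 0 := by
    have hdet := det_eq_one h
    rintro h10
    simp [h00, h10] at hdet
  have hsplit :
      h • s = h • ∑ y : F, upper y • s - ∑ y ∈ Finset.univ.erase 0, (h * upper y) • s := by
    rw [Finset.smul_sum, ← Finset.add_sum_erase _ _ (Finset.mem_univ 0)]
    simp [mul_smul]
  rw [hsplit]
  refine sub_mem ?_ (Submodule.sum_mem _ fun y hy ↦ ?_)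
  · have hfix := isLowerFixed_smul_of_antidiagonal (upper_smul_sum_upper_smul · s) h00 h11
    simpa using upper_smul_mem_upperSpan (k := k) hfix 0
  · refine smul_mem_upperSpan_of_apply_one_one_ne_zero hs ?_
    rw [mul_upper_apply_one_one, h11, add_zero]
    exact mul_ne_zero h10 (Finset.ne_of_mem_erase hy)

variable [SMulCommClass (SpecialLinearGroup (Fin 2) F) k W]

lemma upper_smul_mem_upperSpan_of_mem {w : W} (hw : w ∈ upperSpan k F W) (t : F) :
    upper t • w ∈ upperSpan k F W := by
  have : (upperSpan k F W).map (DistribSMul.toLinearMap k W (upper t)) ≤ upperSpan k F W := by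
    refine (Submodule.map_span_le _ _ _).mpr ?_
    rintro _ ⟨a, s, hs, rfl⟩
    simpa [← mul_smul, upper_mul_upper] using upper_smul_mem_upperSpan hs (t + a)
  exact this (Submodule.mem_map_of_mem hw)

lemma smul_mem_upperSpan_of_apply_one_one_eq_zero [Fintype F] {s : W} (hs : IsLowerFixed F s)
    {g : SpecialLinearGroup (Fin 2) F} (hg : g 1 1 = 0) : g • s ∈ upperSpan k F W := by
  have h10 : g 1 0 ≠ 0 := by
    have hdet := det_eq_one g
    rintro h10
    simp [hg, h10] at hdet
  set t := g 0 0 / g 1 0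
  have h00 : (upper (-t) * g) 0 0 = 0 := by
    rw [upper_mul_apply_zero, neg_mul, div_mul_cancel₀ _ h10, add_neg_cancel]
  have h11 : (upper (-t) * g) 1 1 = 0 := by rw [upper_mul_apply_one, hg]
  rw [eq_upper_mul t g, mul_smul]
  exact upper_smul_mem_upperSpan_of_mem (smul_mem_upperSpan_of_antidiagonal hs h00 h11) t

theorem smul_mem_upperSpan [Fintype F] {s : W} (hs : IsLowerFixed F s)
    (g : SpecialLinearGroup (Fin 2) F) : g • s ∈ upperSpan k F W := by
  by_cases hg : g 1 1 = 0
  · exact smul_mem_upperSpan_of_apply_one_one_eq_zero hs hg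
  · exact smul_mem_upperSpan_of_apply_one_one_ne_zero hs hg

end SLTwo

theorem stmt6_general (p : ℕ) [Fact p.Prime] (k : Type*) [Field k]
    (W : Type*) [AddCommGroup W] [Module k W]
    [DistribMulAction (Matrix.SpecialLinearGroup (Fin 2) (ZMod p)) W]
    [SMulCommClass (Matrix.SpecialLinearGroup (Fin 2) (ZMod p)) k W]
    (hgen : Submodule.span k
      {x : W | ∃ (g : Matrix.SpecialLinearGroup (Fin 2) (ZMod p)) (s : W),
        (∀ a : ZMod p, lowEl p a • s = s) ∧ x = g • s} = ⊤) :
    Submodule.span k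
      {x : W | ∃ (a : ZMod p) (s : W),
        (∀ b : ZMod p, lowEl p b • s = s) ∧ x = upEl p a • s} = ⊤ := by
  rw [eq_top_iff, ← hgen, Submodule.span_le]
  rintro _ ⟨g, s, hs, rfl⟩
  -- `upEl p` and `lowEl p` are `SLTwo.upper` and `SLTwo.lower` over `ZMod p` by definition.
  exact SLTwo.smul_mem_upperSpan hs g

/-- If a `k[SL₂(F_p)]`-module `W` is generated by its invariants under the lower unipotent
subgroup `Ū'`, then it is generated by these invariants already as a module over the
opposite (upper) unipotent subgroup `Ū`. -/
theorem stmt6 (p : ℕ) [Fact p.Prime] (k : Type*) [Field k] [CharP k p]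
    (W : Type*) [AddCommGroup W] [Module k W]
    [DistribMulAction (Matrix.SpecialLinearGroup (Fin 2) (ZMod p)) W]
    [SMulCommClass (Matrix.SpecialLinearGroup (Fin 2) (ZMod p)) k W]
    (hgen : Submodule.span k
      {x : W | ∃ (g : Matrix.SpecialLinearGroup (Fin 2) (ZMod p)) (s : W),
        (∀ a : ZMod p, lowEl p a • s = s) ∧ x = g • s} = ⊤) :
    Submodule.span k
      {x : W | ∃ (a : ZMod p) (s : W),
        (∀ b : ZMod p, lowEl p b • s = s) ∧ x = upEl p a • s} = ⊤ :=
  stmt6_general p k W hgen
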